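/- arXiv:2406.06875 — 2 statements merged into one kernel-verified Lean document; each statement's English description precedes it below -/
import Mathlib

section
/- Let F be a holomorphic function on an open set containing the closed unit disk 𝔻̄ = {z ∈ ℂ : |z| ≤ 1} with F′(z) ≠ 0 for all z ∈ 𝔻̄, and let γ(θ) = F(e^{iθ}) be the associated boundary curve. Then the Whitney index of γ equals one: (1/(2πi)) ∫₀^{2π} γ″(θ)/γ′(θ) dθ = 1, where primes denote derivatives with respect to θ (note γ′(θ) = i e^{iθ} F′(e^{iθ}) never vanishes, so the integrand is well defined). -/
/-!
Along the boundary curve `γ = F ∘ circleMap 0 1` one has `γ'(θ) = F'(e^{iθ}) · i e^{iθ}`, so the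
logarithmic derivative of `γ'` splits as `i + (e^{iθ})' · (F''/F')(e^{iθ})`. The constant `i`
contributes `2πi` to the integral, and the second term integrates to the contour integral of
`F''/F'` over the unit circle, which vanishes by Cauchy's theorem because `F'` has no zeros on
the closed disk.
-/

open Complex Metric Set

theorem AnalyticOnNhd.differentiableOn_logDeriv {𝕜 : Type*} [NontriviallyNormedField 𝕜]
    [CompleteSpace 𝕜] {g : 𝕜 → 𝕜} {s : Set 𝕜} (hg : AnalyticOnNhd 𝕜 g s)
    (hg₀ : ∀ z ∈ s, g z ≠ 0) : DifferentiableOn 𝕜 (logDeriv g) s := fun z hz =>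
  ((hg z hz).deriv.differentiableAt.div (hg z hz).differentiableAt
    (hg₀ z hz)).differentiableWithinAt

theorem circleIntegral_logDeriv_eq_zero {g : ℂ → ℂ} {c : ℂ} {R : ℝ} (hR : 0 ≤ R)
    (hg : AnalyticOnNhd ℂ g (closedBall c R)) (hg₀ : ∀ z ∈ closedBall c R, g z ≠ 0) :
    ∮ z in C(c, R), logDeriv g z = 0 :=
  ((hg.differentiableOn_logDeriv hg₀).diffContOnCl_ball subset_rfl).circleIntegral_eq_zero hR

theorem logDeriv_circleMap_zero {R : ℝ} (hR : R ≠ 0) (θ : ℝ) : logDeriv (circleMap 0 R) θ = I := by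
  rw [logDeriv_apply, deriv_circleMap, mul_div_cancel_left₀ _ (circleMap_ne_center hR)]

section CircleComposition

variable {F : ℂ → ℂ} {c : ℂ} {R : ℝ}

theorem deriv_comp_circleMap (hF : ∀ θ, DifferentiableAt ℂ F (circleMap c R θ)) :
    deriv (F ∘ circleMap c R) = fun θ => deriv F (circleMap c R θ) * (circleMap 0 R θ * I) :=
  funext fun θ => ((hF θ).hasDerivAt.comp θ (hasDerivAt_circleMap c R θ)).deriv

theorem logDeriv_deriv_comp_circleMap (hR : R ≠ 0) (hF : ∀ θ, AnalyticAt ℂ F (circleMap c R θ))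
    (hF' : ∀ θ, deriv F (circleMap c R θ) ≠ 0) (θ : ℝ) :
    logDeriv (deriv (F ∘ circleMap c R)) θ
      = deriv (circleMap c R) θ • logDeriv (deriv F) (circleMap c R θ) + I := by
  have hcirc : DifferentiableAt ℝ (circleMap c R) θ := differentiable_circleMap c R θ
  have hF'circ : DifferentiableAt ℂ (deriv F) (circleMap c R θ) := (hF θ).deriv.differentiableAt
  rw [deriv_comp_circleMap fun θ => (hF θ).differentiableAt]
  change logDeriv (fun t => (deriv F ∘ circleMap c R) t * (circleMap 0 R t * I)) θ = _
  rw [logDeriv_mul (g := fun t => circleMap 0 R t * I) θ (hF' θ)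
      (mul_ne_zero (circleMap_ne_center hR) I_ne_zero)
      ((hF'circ.restrictScalars ℝ).comp θ hcirc) ((differentiable_circleMap 0 R θ).mul_const I),
    logDeriv_comp hF'circ hcirc, logDeriv_mul_const θ I I_ne_zero, logDeriv_circleMap_zero hR,
    smul_eq_mul, mul_comm]

theorem integral_logDeriv_deriv_comp_circleMap (hR : 0 < R)
    (hF : AnalyticOnNhd ℂ F (closedBall c R)) (hF' : ∀ z ∈ closedBall c R, deriv F z ≠ 0) :
    ∫ θ in (0 : ℝ)..2 * Real.pi, logDeriv (deriv (F ∘ circleMap c R)) θ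
      = 2 * Real.pi * I := by
  have hcircle : ∀ θ, circleMap c R θ ∈ closedBall c R := circleMap_mem_closedBall c hR.le
  have hcont : ContinuousOn (logDeriv (deriv F)) (closedBall c R) :=
    (hF.deriv.differentiableOn_logDeriv hF').continuousOn
  rw [intervalIntegral.integral_congr fun θ _ => logDeriv_deriv_comp_circleMap hR.ne'
      (fun θ => hF _ (hcircle θ)) (fun θ => hF' _ (hcircle θ)) θ,
    intervalIntegral.integral_add ((hcont.mono sphere_subset_closedBall).circleIntegrable hR.le).out
      intervalIntegrable_const]
  change (∮ z in C(c, R), logDeriv (deriv F) z) + _ = _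
  rw [circleIntegral_logDeriv_eq_zero hR.le hF.deriv hF', intervalIntegral.integral_const]
  simp

end CircleComposition

/-- The Whitney index of the boundary curve `γ(θ) = F(e^{iθ})` of a holomorphic
immersion `F` of the closed unit disk equals one. -/
theorem stmt_2 (F : ℂ → ℂ) (U : Set ℂ) (hU : IsOpen U)
    (hDU : Metric.closedBall (0 : ℂ) 1 ⊆ U)
    (hF : DifferentiableOn ℂ F U)
    (hF' : ∀ z ∈ Metric.closedBall (0 : ℂ) 1, deriv F z ≠ 0)
    (γ : ℝ → ℂ) (hγ : ∀ θ : ℝ, γ θ = F (Complex.exp (θ * Complex.I))) :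
    (1 / (2 * (Real.pi : ℂ) * Complex.I)) *
      ∫ θ in (0 : ℝ)..(2 * Real.pi), deriv (deriv γ) θ / deriv γ θ = 1 := by
  obtain rfl : γ = F ∘ circleMap 0 1 := funext fun θ => by simp [hγ, circleMap]
  have hI := integral_logDeriv_deriv_comp_circleMap one_pos ((hF.analyticOnNhd hU).mono hDU) hF'
  simp only [logDeriv_apply] at hI
  rw [hI]
  field_simp [Real.pi_ne_zero, I_ne_zero]
end

section
/- For every β > 0 and every real s with 0 < |s| < 2π/β, the Laplace transform of the area distribution of the closed Brownian loop model equals (π/(2β)) · ∫_{−∞}^{∞} e^{−sA} / cosh²(πA/β) dA = (sβ/2) / sin(sβ/2). In particular (taking s = Λ/(16π)) the fixed-length partition function of the random-polygon model is W^{RP}(β,Λ) = W^{RP}(β,0) · (Λβ/(32π)) / sin(Λβ/(32π)), which diverges as |Λ|β approaches the maximal value 32π². -/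
/-!
After rescaling `t = 2πA/β`, the logistic substitution `y = sigmoid t` turns `dt / (4 cosh² (t/2))`
into `dy` on `(0, 1)` and `exp (-c t)` into `y ^ (-c) (1 - y) ^ c`, where `c = sβ/(2π)`. The
integral becomes the Beta integral `B(1 - c, 1 + c) = Γ(1 - c) Γ(1 + c) = πc / sin (πc)`, by
Euler's reflection formula; `|c| < 1` is exactly the convergence condition `|s| < 2π/β`.
-/

open MeasureTheory Set Real

theorem integral_Ioo_rpow_mul_one_sub_rpow {p q : ℝ} (hp : 0 < p) (hq : 0 < q) :
    ∫ y in Ioo (0 : ℝ) 1, y ^ (p - 1) * (1 - y) ^ (q - 1) = Gamma p * Gamma q / Gamma (p + q) := by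
  apply Complex.ofReal_injective
  have hbeta := Complex.betaIntegral_eq_Gamma_mul_div p q (by simpa) (by simpa)
  rw [← Complex.ofReal_add, Complex.Gamma_ofReal, Complex.Gamma_ofReal,
    Complex.Gamma_ofReal] at hbeta
  push_cast
  rw [← hbeta, Complex.betaIntegral, intervalIntegral.integral_of_le zero_le_one,
    integral_Ioc_eq_integral_Ioo, ← integral_complex_ofReal]
  refine setIntegral_congr_fun measurableSet_Ioo fun y ⟨hy0, hy1⟩ ↦ ?_
  push_cast
  rw [Complex.ofReal_cpow hy0.le, Complex.ofReal_cpow (sub_nonneg.mpr hy1.le)]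
  push_cast
  rfl

theorem integral_Ioo_rpow_neg_mul_one_sub_rpow {c : ℝ} (hc0 : c ≠ 0) (hc : |c| < 1) :
    ∫ y in Ioo (0 : ℝ) 1, y ^ (-c) * (1 - y) ^ c = π * c / sin (π * c) := by
  obtain ⟨hl, hr⟩ := abs_lt.mp hc
  have := integral_Ioo_rpow_mul_one_sub_rpow (p := 1 - c) (q := c + 1) (by linarith) (by linarith)
  rw [show 1 - c - 1 = -c by ring, add_sub_cancel_right, show 1 - c + (c + 1) = 1 + 1 by ring,
    Gamma_add_one one_ne_zero, Gamma_one, Gamma_add_one hc0, mul_one] at this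
  rw [this, mul_left_comm, mul_comm (Gamma _), Gamma_mul_Gamma_one_sub]
  ring

theorem integral_sigmoid_mul_one_sub_sigmoid_smul_comp {E : Type*} [NormedAddCommGroup E]
    [NormedSpace ℝ E] (f : ℝ → E) :
    ∫ x, (sigmoid x * (1 - sigmoid x)) • f (sigmoid x) = ∫ y in Ioo 0 1, f y := by
  have hσ' : ∀ x, 0 < sigmoid x * (1 - sigmoid x) := fun x ↦
    mul_pos (sigmoid_pos x) (sub_pos.mpr (sigmoid_lt_one x))
  rw [← range_sigmoid, ← image_univ, integral_image_eq_integral_abs_deriv_smul MeasurableSet.univ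
    (fun x _ ↦ (hasDerivAt_sigmoid x).hasDerivWithinAt) sigmoid_injective.injOn, setIntegral_univ]
  simp_rw [abs_of_pos (hσ' _)]

theorem sigmoid_mul_one_sub_sigmoid (t : ℝ) :
    sigmoid t * (1 - sigmoid t) = 1 / (4 * cosh (t / 2) ^ 2) := by
  have he : exp t = exp (t / 2) ^ 2 := by rw [← exp_nat_mul]; ring_nf
  rw [← sigmoid_neg, sigmoid_def, sigmoid_def, neg_neg, cosh_eq, exp_neg, exp_neg, he]
  field_simp
  ring

theorem sigmoid_rpow_neg_mul_one_sub_sigmoid_rpow (c t : ℝ) :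
    sigmoid t ^ (-c) * (1 - sigmoid t) ^ c = exp (-(c * t)) := by
  rw [← sigmoid_neg, ← sigmoid_mul_rexp_neg, mul_rpow (sigmoid_pos t).le (exp_pos _).le,
    ← mul_assoc, ← rpow_add (sigmoid_pos t), neg_add_cancel, rpow_zero, one_mul, ← exp_mul]
  ring_nf

theorem integral_exp_neg_mul_div_cosh_half_sq {c : ℝ} (hc0 : c ≠ 0) (hc : |c| < 1) :
    ∫ t, exp (-(c * t)) / cosh (t / 2) ^ 2 = 4 * (π * c / sin (π * c)) := by
  have hpt : ∀ t, exp (-(c * t)) / cosh (t / 2) ^ 2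
      = 4 * ((sigmoid t * (1 - sigmoid t)) • (sigmoid t ^ (-c) * (1 - sigmoid t) ^ c)) := by
    intro t
    rw [sigmoid_mul_one_sub_sigmoid, sigmoid_rpow_neg_mul_one_sub_sigmoid_rpow, smul_eq_mul]
    field_simp
  simp_rw [hpt, integral_const_mul, integral_sigmoid_mul_one_sub_sigmoid_smul_comp
    (fun y ↦ y ^ (-c) * (1 - y) ^ c), integral_Ioo_rpow_neg_mul_one_sub_rpow hc0 hc]

/-- Laplace transform of the Brownian-loop (Lévy) area distribution: for `β > 0` and
`0 < |s| < 2π/β`, `(π/(2β)) ∫ e^{−sA} / cosh²(πA/β) dA = (sβ/2)/sin(sβ/2)`. -/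
theorem stmt_10 (β s : ℝ) (hβ : 0 < β) (hs0 : 0 < |s|) (hs : |s| < 2 * Real.pi / β) :
    (Real.pi / (2 * β)) *
      ∫ A : ℝ, Real.exp (-(s * A)) / (Real.cosh (Real.pi * A / β)) ^ 2
      = (s * β / 2) / Real.sin (s * β / 2) := by
  set c := s * β / (2 * π) with hc_def
  have hc0 : c ≠ 0 := div_ne_zero (mul_ne_zero (abs_pos.mp hs0) hβ.ne') two_pi_pos.ne'
  have hc : |c| < 1 := by
    rw [abs_div, abs_mul, abs_of_pos hβ, abs_of_pos two_pi_pos, div_lt_one two_pi_pos]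
    exact (lt_div_iff₀ hβ).mp hs
  have hrescale : ∀ A, exp (-(s * A)) / cosh (π * A / β) ^ 2
      = exp (-(c * (2 * π / β * A))) / cosh (2 * π / β * A / 2) ^ 2 := fun A ↦ by
    rw [hc_def]
    congr 3 <;> field_simp
  simp_rw [hrescale]
  rw [Measure.integral_comp_mul_left (fun t ↦ exp (-(c * t)) / cosh (t / 2) ^ 2),
    integral_exp_neg_mul_div_cosh_half_sq hc0 hc, abs_of_pos (by positivity), smul_eq_mul,
    show π * c = s * β / 2 by rw [hc_def]; field_simp]
  field_simp
  ring
end
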